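/- arXiv:2509.02497 — 11 statements merged into one kernel-verified Lean document; each statement's English description precedes it below -/
import Mathlib

section
/- Let f be a Fréchet differentiable pseudolinear function on an open convex set S in a real Banach space E. Then there exists a positive function p : S × S → (0,∞) such that f(y) − f(x) = p(x,y) · ⟨∇f(x), y − x⟩ for all x, y in S. -/
/-!
Pseudolinearity forces `f y - f x` and `f' x (y - x)` to have the same sign, so the quotient of
the two (or `1` when both vanish) is a positive proportionality factor. The only nontrivial
case is `f y = f x`: maximising `f` over the segment `[x, y]`, either `x` itself is a maximiser,
so `f' x (y - x) ≤ 0`, or a maximiser `z` lies strictly above `f x`, and then pseudoconvexity at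
`z` towards `x` contradicts maximality at `z` towards `y`. Applied to `f` and `-f` this gives
`f' x (y - x) = 0`.
-/

def Pseudoconvex {E : Type*} [NormedAddCommGroup E] [NormedSpace ℝ E]
    (S : Set E) (f : E → ℝ) (f' : E → E →L[ℝ] ℝ) : Prop :=
  ∀ x ∈ S, ∀ y ∈ S, f y < f x → f' x (y - x) < 0

def Pseudolinear {E : Type*} [NormedAddCommGroup E] [NormedSpace ℝ E]
    (S : Set E) (f : E → ℝ) (f' : E → E →L[ℝ] ℝ) : Prop :=
  Pseudoconvex S f f' ∧ Pseudoconvex S (fun x => -f x) (fun x => -(f' x))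

theorem isCompact_segment {E : Type*} [NormedAddCommGroup E] [NormedSpace ℝ E] (x y : E) :
    IsCompact (segment ℝ x y) := by
  rw [segment_eq_image_lineMap]
  exact isCompact_Icc.image AffineMap.lineMap_continuous

theorem IsMaxOn.hasFDerivWithinAt_sub_nonpos {E : Type*} [NormedAddCommGroup E] [NormedSpace ℝ E]
    {f : E → ℝ} {f' : E →L[ℝ] ℝ} {s : Set E} {z v : E} (hs : Convex ℝ s)
    (hmax : IsMaxOn f s z) (hf : HasFDerivWithinAt f f' s z) (hz : z ∈ s) (hv : v ∈ s) :
    f' (v - z) ≤ 0 :=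
  hmax.localize.hasFDerivWithinAt_nonpos hf
    (sub_mem_posTangentConeAt_of_segment_subset (hs.segment_subset hz hv))

section

variable {E : Type*} [NormedAddCommGroup E] [NormedSpace ℝ E] {S : Set E} {f : E → ℝ}
  {f' : E → E →L[ℝ] ℝ} {x y : E}

theorem Pseudoconvex.apply_sub_nonpos_of_le (hf : Pseudoconvex S f f') (hS : Convex ℝ S)
    (hdiff : ∀ x ∈ S, HasFDerivAt f (f' x) x) (hx : x ∈ S) (hy : y ∈ S) (hxy : f y ≤ f x) :
    f' x (y - x) ≤ 0 := by
  set K := segment ℝ x y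
  have hKS : K ⊆ S := hS.segment_subset hx hy
  have hmax_deriv : ∀ z ∈ K, IsMaxOn f K z → ∀ v ∈ K, f' z (v - z) ≤ 0 :=
    fun z hz hmax v hv => hmax.hasFDerivWithinAt_sub_nonpos (convex_segment x y)
      (hdiff z (hKS hz)).hasFDerivWithinAt hz hv
  have hcont : ContinuousOn f K := fun z hz => (hdiff z (hKS hz)).continuousAt.continuousWithinAt
  obtain ⟨z, hzK, hzmax⟩ :=
    (isCompact_segment x y).exists_isMaxOn ⟨x, left_mem_segment ℝ x y⟩ hcont
  rcases le_or_gt (f z) (f x) with hzx | hzx'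
  · exact hmax_deriv x (left_mem_segment ℝ x y) (fun w hw => (hzmax hw).trans hzx) y
      (right_mem_segment ℝ x y)
  have hdesc : f' z (x - z) < 0 := hf z (hKS hzK) x hx hzx'
  have hy_side : f' z (y - z) ≤ 0 := hmax_deriv z hzK hzmax y (right_mem_segment ℝ x y)
  obtain ⟨a, b, ha, hb, hab, hz⟩ := hzK
  -- `z = a • x + b • y`, so the slopes of `f` at `z` towards `x` and towards `y` cancel.
  have hcomb : a * f' z (x - z) + b * f' z (y - z) = 0 := by
    rw [← smul_eq_mul, ← smul_eq_mul, ← map_smul, ← map_smul, ← map_add, smul_sub, smul_sub,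
      sub_add_sub_comm, ← add_smul, hab, one_smul, hz, sub_self, map_zero]
  rcases ha.eq_or_lt with rfl | ha
  · rw [← hz, zero_smul, zero_add, show b = 1 by linarith, one_smul] at hzx'
    linarith
  · nlinarith

theorem Pseudolinear.sign_apply_sub (hf : Pseudolinear S f f') (hS : Convex ℝ S)
    (hdiff : ∀ x ∈ S, HasFDerivAt f (f' x) x) (hx : x ∈ S) (hy : y ∈ S) :
    SignType.sign (f' x (y - x)) = SignType.sign (f y - f x) := by
  rcases lt_trichotomy (f y) (f x) with hlt | heq | hgt
  · rw [sign_neg (hf.1 x hx y hy hlt), sign_neg (sub_neg.2 hlt)]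
  · have hle := hf.1.apply_sub_nonpos_of_le hS hdiff hx hy heq.le
    have hge := hf.2.apply_sub_nonpos_of_le hS (fun z hz => (hdiff z hz).neg) hx hy
      (neg_le_neg heq.ge)
    rw [heq, sub_self, le_antisymm hle (by simpa using hge)]
  · have hpos := hf.2 x hx y hy (neg_lt_neg hgt)
    rw [sign_pos (by simpa using hpos), sign_pos (sub_pos.2 hgt)]

end

theorem div_pos_of_sign_eq {a b : ℝ} (h : SignType.sign a = SignType.sign b) (hb : b ≠ 0) :
    0 < a / b := by
  rcases hb.lt_or_gt with hb | hb
  · exact div_pos_of_neg_of_neg (sign_eq_neg_one_iff.1 (h.trans (sign_neg hb))) hb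
  · exact div_pos (sign_eq_one_iff.1 (h.trans (sign_pos hb))) hb

theorem stmt_1_general {E : Type*} [NormedAddCommGroup E] [NormedSpace ℝ E]
    {S : Set E} (hSc : Convex ℝ S)
    (f : E → ℝ) (f' : E → E →L[ℝ] ℝ)
    (hdiff : ∀ x ∈ S, HasFDerivAt f (f' x) x)
    (hpl : Pseudolinear S f f') :
    ∃ p : E → E → ℝ, (∀ x ∈ S, ∀ y ∈ S, 0 < p x y) ∧
      ∀ x ∈ S, ∀ y ∈ S, f y - f x = p x y * f' x (y - x) := by
  refine ⟨fun x y => if f' x (y - x) = 0 then 1 else (f y - f x) / f' x (y - x),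
    fun x hx y hy => ?_, fun x hx y hy => ?_⟩ <;>
  have hsign := hpl.sign_apply_sub hSc hdiff hx hy <;>
  dsimp only <;>
  split_ifs with h
  · exact one_pos
  · exact div_pos_of_sign_eq hsign.symm h
  · rw [h, mul_zero, ← sign_eq_zero_iff, ← hsign, h, sign_zero]
  · exact (div_mul_cancel₀ _ h).symm

theorem stmt_1 {E : Type*} [NormedAddCommGroup E] [NormedSpace ℝ E] [CompleteSpace E]
    {S : Set E} (hSo : IsOpen S) (hSc : Convex ℝ S)
    (f : E → ℝ) (f' : E → E →L[ℝ] ℝ)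
    (hdiff : ∀ x ∈ S, HasFDerivAt f (f' x) x)
    (hpl : Pseudolinear S f f') :
    ∃ p : E → E → ℝ, (∀ x ∈ S, ∀ y ∈ S, 0 < p x y) ∧
      ∀ x ∈ S, ∀ y ∈ S, f y - f x = p x y * f' x (y - x) :=
  stmt_1_general hSc f f' hdiff hpl
end

section
/- Let f be a Fréchet differentiable pseudoconvex function on an open convex set S in a real Banach space E. Then for all x, y in S with f(y) ≤ f(x), it holds that ⟨∇f(x), y − x⟩ ≤ 0. -/
/-!
If `f' x (y - x) > 0`, then `f` strictly increases along the segment from `x` towards `y`, so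
some point `z` strictly between `x` and `y` has `f z > f x ≥ f y`. Pseudoconvexity at `z` then
makes `f' z` negative in both directions `x - z` and `y - z`, which point opposite ways.
-/

open Filter Set Topology

section

variable {E : Type*} [NormedAddCommGroup E] [NormedSpace ℝ E]

theorem HasFDerivAt.eventually_lt_add_smul {f : E → ℝ} {f' : E →L[ℝ] ℝ} {x v : E}
    (hf : HasFDerivAt f f' x) (hv : 0 < f' v) :
    ∀ᶠ t in 𝓝[>] (0 : ℝ), f x < f (x + t • v) := by
  have hline : HasDerivAt (fun t : ℝ => f (x + t • v)) (f' v) 0 := by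
    refine hf.comp_hasDerivAt_of_eq 0 ?_ (by simp)
    simpa using ((hasDerivAt_id (0 : ℝ)).smul_const v).const_add x
  filter_upwards [hline.tendsto_slope_zero_right.eventually (eventually_gt_nhds hv),
    self_mem_nhdsWithin] with t hslope (ht : 0 < t)
  simp only [zero_add, zero_smul, add_zero, smul_eq_mul] at hslope
  have := pos_of_mul_pos_right hslope (inv_nonneg.mpr ht.le)
  linarith

theorem Pseudoconvex.le_max_of_mem_openSegment {S : Set E} {f : E → ℝ} {f' : E → E →L[ℝ] ℝ}
    (hpc : Pseudoconvex S f f') {x y z : E} (hx : x ∈ S) (hy : y ∈ S) (hz : z ∈ S)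
    (hxyz : z ∈ openSegment ℝ x y) : f z ≤ max (f x) (f y) := by
  obtain ⟨a, b, ha, hb, hab, rfl⟩ := hxyz
  by_contra! hlt
  rw [max_lt_iff] at hlt
  have hdx := hpc _ hz x hx hlt.1
  have hdy := hpc _ hz y hy hlt.2
  have hcomb : a • (x - (a • x + b • y)) + b • (y - (a • x + b • y)) = 0 := by
    calc _ = (1 - (a + b)) • (a • x + b • y) := by module
      _ = 0 := by rw [hab, sub_self, zero_smul]
  have := congrArg (f' (a • x + b • y)) hcomb
  simp only [map_add, map_smul, map_zero, smul_eq_mul] at this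
  linarith [mul_neg_of_pos_of_neg ha hdx, mul_neg_of_pos_of_neg hb hdy]

end

theorem stmt_4_general {E : Type*} [NormedAddCommGroup E] [NormedSpace ℝ E]
    {S : Set E} (hSo : IsOpen S)
    (f : E → ℝ) (f' : E → E →L[ℝ] ℝ)
    (hdiff : ∀ x ∈ S, HasFDerivAt f (f' x) x)
    (hpc : Pseudoconvex S f f') :
    ∀ x ∈ S, ∀ y ∈ S, f y ≤ f x → f' x (y - x) ≤ 0 := by
  intro x hx y hy hle
  by_contra! hpos
  have hnear : ∀ᶠ t in 𝓝[>] (0 : ℝ), x + t • (y - x) ∈ S := by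
    have : Tendsto (fun t : ℝ => x + t • (y - x)) (𝓝 0) (𝓝 x) := by
      simpa using ((tendsto_id (x := 𝓝 (0 : ℝ))).smul_const (y - x)).const_add x
    exact (this.eventually (hSo.mem_nhds hx)).filter_mono nhdsWithin_le_nhds
  obtain ⟨t, hrise, hmem, ht⟩ := ((hdiff x hx).eventually_lt_add_smul hpos |>.and <|
    hnear.and (Ioo_mem_nhdsGT one_pos)).exists
  have hseg : x + t • (y - x) ∈ openSegment ℝ x y := openSegment_eq_image' ℝ x y ▸ ⟨t, ht, rfl⟩
  have hbound := hpc.le_max_of_mem_openSegment hx hy hmem hseg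
  rw [max_eq_left hle] at hbound
  linarith

theorem stmt_4 {E : Type*} [NormedAddCommGroup E] [NormedSpace ℝ E] [CompleteSpace E]
    {S : Set E} (hSo : IsOpen S) (hSc : Convex ℝ S)
    (f : E → ℝ) (f' : E → E →L[ℝ] ℝ)
    (hdiff : ∀ x ∈ S, HasFDerivAt f (f' x) x)
    (hpc : Pseudoconvex S f f') :
    ∀ x ∈ S, ∀ y ∈ S, f y ≤ f x → f' x (y - x) ≤ 0 :=
  stmt_4_general hSo f f' hdiff hpc
end

section
/- Let f be a Fréchet differentiable function on an open convex set S in a real Banach space E. Then f is pseudolinear on S if and only if there exists a positive function p : S × S → (0,∞) such that p(x,y)·⟨∇f(x), y − x⟩ + p(y,x)·⟨∇f(y), x − y⟩ = 0 for all x, y in S. -/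
open Set Filter Topology



section Aux

variable {E : Type*} [NormedAddCommGroup E] [NormedSpace ℝ E]
    {S : Set E}
    {f : E → ℝ} {f' : E → E →L[ℝ] ℝ}

private lemma line_hasDerivAt (x y : E) (t : ℝ) :
    HasDerivAt (fun t : ℝ => x + t • (y - x)) (y - x) t := by
  simpa using ((hasDerivAt_id t).smul_const (y - x)).const_add x

private lemma line_mem (hSc : Convex ℝ S) {x y : E} (hx : x ∈ S) (hy : y ∈ S) {t : ℝ}
    (ht0 : 0 ≤ t) (ht1 : t ≤ 1) : x + t • (y - x) ∈ S := by
  have h : x + t • (y - x) = (1 - t) • x + t • y := by module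
  rw [h]
  exact hSc hx hy (by linarith) ht0 (by ring)

private lemma g_hasDerivAt (hSc : Convex ℝ S) (hdiff : ∀ x ∈ S, HasFDerivAt f (f' x) x)
    {x y : E} (hx : x ∈ S) (hy : y ∈ S) {t : ℝ} (ht0 : 0 ≤ t) (ht1 : t ≤ 1) :
    HasDerivAt (fun t : ℝ => f (x + t • (y - x)))
      (f' (x + t • (y - x)) (y - x)) t :=
  (hdiff _ (line_mem hSc hx hy ht0 ht1)).comp_hasDerivAt t (line_hasDerivAt x y t)

/-- If `f` is pseudolinear and `f x = f y`, the derivative at `x` in direction `y - x`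
cannot be positive. -/
private lemma not_pos_of_eq (hSc : Convex ℝ S) (hdiff : ∀ x ∈ S, HasFDerivAt f (f' x) x)
    (hpl : Pseudolinear S f f') {x y : E} (hx : x ∈ S) (hy : y ∈ S)
    (hfeq : f x = f y) : ¬ (0 < f' x (y - x)) := by
  intro hc
  set g : ℝ → ℝ := fun t => f (x + t • (y - x)) with hg
  have hg0 : HasDerivAt g (f' x (y - x)) 0 := by
    simpa using g_hasDerivAt hSc hdiff hx hy le_rfl zero_le_one
  have hslope := hasDerivAt_iff_tendsto_slope.mp hg0
  have hslope' : Tendsto (slope g 0) (𝓝[>] (0:ℝ)) (𝓝 (f' x (y - x))) :=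
    hslope.mono_left (nhdsWithin_mono 0 (fun t ht => ne_of_gt ht))
  have h1 : ∀ᶠ t in 𝓝[>] (0:ℝ), 0 < slope g 0 t := hslope'.eventually_const_lt hc
  have h2 : ∀ᶠ t in 𝓝[>] (0:ℝ), t ∈ Ioo (0:ℝ) 1 :=
    eventually_mem_set.mpr (Ioo_mem_nhdsGT_of_mem (by constructor <;> norm_num))
  obtain ⟨t, hts, htI⟩ := (h1.and h2).exists
  obtain ⟨ht0, ht1⟩ := htI
  have hgt : g 0 < g t := by
    have h : 0 < t⁻¹ * (g t - g 0) := by simpa [slope] using hts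
    have h2' := mul_pos ht0 h
    rw [← mul_assoc, mul_inv_cancel₀ (ne_of_gt ht0), one_mul] at h2'
    linarith
  set z := x + t • (y - x) with hz
  have hzS : z ∈ S := line_mem hSc hx hy ht0.le ht1.le
  have hg00 : g 0 = f x := by simp [hg]
  have hfxz : f x < f z := by rw [← hg00]; exact hgt
  have hfyz : f y < f z := hfeq ▸ hfxz
  have hd1 : f' z (x - z) < 0 := hpl.1 z hzS x hx hfxz
  have hd2 : f' z (y - z) < 0 := hpl.1 z hzS y hy hfyz
  have hxz : x - z = (-t) • (y - x) := by rw [hz]; module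
  have hyz : y - z = (1 - t) • (y - x) := by rw [hz]; module
  rw [hxz, map_smul, smul_eq_mul] at hd1
  rw [hyz, map_smul, smul_eq_mul] at hd2
  nlinarith

private lemma neg_pseudolinear (hpl : Pseudolinear S f f') :
    Pseudolinear S (fun x => -f x) (fun x => -(f' x)) := by
  refine ⟨hpl.2, ?_⟩
  intro a ha b hb hab
  simp only [neg_neg] at hab ⊢
  exact hpl.1 a ha b hb hab

private lemma deriv_eq_zero_of_eq (hSc : Convex ℝ S) (hdiff : ∀ x ∈ S, HasFDerivAt f (f' x) x)
    (hpl : Pseudolinear S f f') {x y : E} (hx : x ∈ S) (hy : y ∈ S)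
    (hfeq : f x = f y) : f' x (y - x) = 0 := by
  by_contra hne
  rcases lt_or_gt_of_ne hne with h | h
  · have := not_pos_of_eq hSc (f := fun x => -f x) (f' := fun x => -(f' x))
      (fun a ha => (hdiff a ha).neg) (neg_pseudolinear hpl) hx hy (by simp [hfeq])
    simp only [ContinuousLinearMap.neg_apply] at this
    exact this (by linarith)
  · exact not_pos_of_eq hSc hdiff hpl hx hy hfeq h

/-- Backward direction key: the derivative has the same sign as `f y - f x`. -/
private lemma bwd_key (hSc : Convex ℝ S) (hdiff : ∀ x ∈ S, HasFDerivAt f (f' x) x)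
    {p : E → E → ℝ} (hp : ∀ x ∈ S, ∀ y ∈ S, 0 < p x y)
    (heq : ∀ x ∈ S, ∀ y ∈ S, p x y * f' x (y - x) + p y x * f' y (x - y) = 0)
    {x y : E} (hx : x ∈ S) (hy : y ∈ S) (hne : f y ≠ f x) :
    0 < f' x (y - x) * (f y - f x) := by
  set g : ℝ → ℝ := fun t => f (x + t • (y - x)) with hg
  have hcont : ContinuousOn g (Icc 0 1) := by
    intro t ht
    exact ((g_hasDerivAt hSc hdiff hx hy ht.1 ht.2).continuousAt).continuousWithinAt
  obtain ⟨c, hcI, hcd⟩ := exists_hasDerivAt_eq_slope g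
    (fun t => f' (x + t • (y - x)) (y - x)) (by norm_num : (0:ℝ) < 1) hcont
    (fun t ht => g_hasDerivAt hSc hdiff hx hy ht.1.le ht.2.le)
  set z := x + c • (y - x) with hz
  have hzS : z ∈ S := line_mem hSc hx hy hcI.1.le hcI.2.le
  have hg0 : g 0 = f x := by simp [hg]
  have hg1 : g 1 = f y := by simp [hg]
  have hD : f' z (y - x) = f y - f x := by
    rw [← hg0, ← hg1]; rw [hcd]; ring
  have hkey := heq x hx z hzS
  have hzx : z - x = c • (y - x) := by rw [hz]; module
  have hxz : x - z = (-c) • (y - x) := by rw [hz]; module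
  rw [hzx, hxz, map_smul, map_smul, smul_eq_mul, smul_eq_mul, hD] at hkey
  have hp1 : 0 < p x z := hp x hx z hzS
  have hp2 : 0 < p z x := hp z hzS x hx
  have hc0 : 0 < c := hcI.1
  have hD0 : f y - f x ≠ 0 := sub_ne_zero.mpr hne
  have hsq : 0 < (f y - f x) ^ 2 := by positivity
  have h1 : p x z * c * (f' x (y - x) * (f y - f x)) = p z x * c * (f y - f x) ^ 2 := by
    linear_combination (f y - f x) * hkey
  nlinarith [h1, mul_pos (mul_pos hp2 hc0) hsq, mul_pos hp1 hc0]

end Aux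

theorem stmt_5 {E : Type*} [NormedAddCommGroup E] [NormedSpace ℝ E] [CompleteSpace E]
    {S : Set E} (hSo : IsOpen S) (hSc : Convex ℝ S)
    (f : E → ℝ) (f' : E → E →L[ℝ] ℝ)
    (hdiff : ∀ x ∈ S, HasFDerivAt f (f' x) x) :
    Pseudolinear S f f' ↔
      ∃ p : E → E → ℝ, (∀ x ∈ S, ∀ y ∈ S, 0 < p x y) ∧
        ∀ x ∈ S, ∀ y ∈ S,
          p x y * f' x (y - x) + p y x * f' y (x - y) = 0 := by
  constructor
  · intro hpl
    refine ⟨fun x y => if f x = f y then 1 else |f' y (x - y)|, ?_, ?_⟩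
    · intro x hx y hy
      by_cases h : f x = f y
      · simp [h]
      · simp only [if_neg h]
        rcases lt_or_gt_of_ne h with hlt | hgt
        · have : f' y (x - y) < 0 := hpl.1 y hy x hx hlt
          exact abs_pos.mpr (ne_of_lt this)
        · have := hpl.2 y hy x hx (by simpa using neg_lt_neg hgt)
          simp only [ContinuousLinearMap.neg_apply, neg_lt, neg_zero] at this
          exact abs_pos.mpr (ne_of_gt this)
    · intro x hx y hy
      by_cases h : f x = f y
      · simp only [if_pos h, if_pos h.symm,
          deriv_eq_zero_of_eq hSc hdiff hpl hx hy h,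
          deriv_eq_zero_of_eq hSc hdiff hpl hy hx h.symm]
        ring
      · simp only [if_neg h, if_neg (Ne.symm h)]
        rcases lt_or_gt_of_ne h with hlt | hgt
        · -- f x < f y : A = f' x (y-x) > 0, B = f' y (x-y) < 0
          have hA : 0 < f' x (y - x) := by
            have := hpl.2 x hx y hy (by simpa using neg_lt_neg hlt)
            simpa [neg_lt, neg_zero] using this
          have hB : f' y (x - y) < 0 := hpl.1 y hy x hx hlt
          rw [abs_of_neg hB, abs_of_pos hA]; ring
        · have hA : f' x (y - x) < 0 := hpl.1 x hx y hy hgt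
          have hB : 0 < f' y (x - y) := by
            have := hpl.2 y hy x hx (by simpa using neg_lt_neg hgt)
            simpa [neg_lt, neg_zero] using this
          rw [abs_of_pos hB, abs_of_neg hA]; ring
  · rintro ⟨p, hp, heq⟩
    constructor
    · intro x hx y hy hlt
      have := bwd_key hSc hdiff hp heq hx hy (ne_of_lt hlt)
      nlinarith
    · intro x hx y hy hlt
      simp only [ContinuousLinearMap.neg_apply, neg_lt, neg_zero] at hlt ⊢
      have hgt : f x < f y := by linarith
      have := bwd_key hSc hdiff hp heq hx hy (ne_of_gt hgt)
      nlinarith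
end

section
/- Let f be a Fréchet differentiable pseudolinear function on an open convex set S in a real Banach space E. Then for all x, y ∈ S and λ ∈ (0,1), there exists a number b > 0 with 0 < λ·b < 1 (when f(x) ≠ f(y); with λ·b ≤ 1 in general) such that f(x + λ(y − x)) = λ·b·f(y) + (1 − λ·b)·f(x). -/
/-!
Along a segment `z = x + t • (y - x)` the directional derivatives `f' z (x - z)` and
`f' z (y - z)` are `-t` and `1 - t` times the same number `f' z (y - x)`, so pseudolinearity
forbids `f z` to lie strictly below or above both `f x` and `f y`. Hence `f` is constant on
`[x, y]` when `f x = f y`, and then the derivative along the segment vanishes. Conversely a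
vanishing directional derivative forces equal values, so `f z = f x ↔ f' z (y - x) = 0 ↔ f z = f y`.
For `f x ≠ f y` the value `f z` therefore lies in the open interval between `f x` and `f y`, i.e.
it is the convex combination `μ f y + (1 - μ) f x` with `μ ∈ (0, 1)`, and `b = μ / λ` works.
-/

namespace Pseudolinear

variable {E : Type*} [NormedAddCommGroup E] [NormedSpace ℝ E]
  {S : Set E} {f : E → ℝ} {f' : E → E →L[ℝ] ℝ} {x y : E}

theorem deriv_pos_of_lt (hpl : Pseudolinear S f f') (hx : x ∈ S) (hy : y ∈ S)
    (h : f x < f y) : 0 < f' x (y - x) := by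
  simpa using hpl.2 x hx y hy (neg_lt_neg h)

theorem eq_of_deriv_eq_zero (hpl : Pseudolinear S f f') (hx : x ∈ S) (hy : y ∈ S)
    (h : f' x (y - x) = 0) : f x = f y := by
  rcases lt_trichotomy (f x) (f y) with hlt | heq | hgt
  · exact absurd h (hpl.deriv_pos_of_lt hx hy hlt).ne'
  · exact heq
  · exact absurd h (hpl.1 x hx y hy hgt).ne

theorem apply_mem_uIcc (hSc : Convex ℝ S) (hpl : Pseudolinear S f f') (hx : x ∈ S)
    (hy : y ∈ S) {t : ℝ} (ht : t ∈ Set.Icc (0 : ℝ) 1) :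
    f (x + t • (y - x)) ∈ Set.uIcc (f x) (f y) := by
  set z := x + t • (y - x)
  have hz : z ∈ S := hSc.add_smul_sub_mem hx hy ht
  have hopposite : f' z (x - z) * f' z (y - z) ≤ 0 := by
    rw [show x - z = (-t) • (y - x) by module, show y - z = (1 - t) • (y - x) by module,
      map_smul, map_smul, smul_eq_mul, smul_eq_mul,
      show -t * f' z (y - x) * ((1 - t) * f' z (y - x)) = -(t * (1 - t) * f' z (y - x) ^ 2) by
        ring,
      neg_nonpos]
    exact mul_nonneg (mul_nonneg ht.1 (sub_nonneg.2 ht.2)) (sq_nonneg _)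
  rw [Set.uIcc, Set.mem_Icc]
  constructor
  · by_contra! hlt
    exact hopposite.not_gt <| mul_pos
      (hpl.deriv_pos_of_lt hz hx (hlt.trans_le (min_le_left _ _)))
      (hpl.deriv_pos_of_lt hz hy (hlt.trans_le (min_le_right _ _)))
  · by_contra! hlt
    exact hopposite.not_gt <| mul_pos_of_neg_of_neg
      (hpl.1 z hz x hx ((le_max_left _ _).trans_lt hlt))
      (hpl.1 z hz y hy ((le_max_right _ _).trans_lt hlt))

theorem apply_eq_of_eq (hSc : Convex ℝ S) (hpl : Pseudolinear S f f') (hx : x ∈ S)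
    (hy : y ∈ S) (hxy : f x = f y) {t : ℝ} (ht : t ∈ Set.Icc (0 : ℝ) 1) :
    f (x + t • (y - x)) = f x := by
  simpa [hxy] using hpl.apply_mem_uIcc hSc hx hy ht

theorem deriv_eq_zero_of_eq (hSc : Convex ℝ S) (hpl : Pseudolinear S f f')
    (hfx : HasFDerivAt f (f' x) x) (hx : x ∈ S) (hy : y ∈ S) (hxy : f x = f y) :
    f' x (y - x) = 0 := by
  have hline : HasDerivAt (fun t : ℝ => x + t • (y - x)) (y - x) 0 := by
    simpa using ((hasDerivAt_id (0 : ℝ)).smul_const (y - x)).const_add x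
  have hcomp : HasDerivAt (fun t : ℝ => f (x + t • (y - x))) (f' x (y - x)) 0 := by
    have hfx0 : HasFDerivAt f (f' x) (x + (0 : ℝ) • (y - x)) := by simpa using hfx
    exact hfx0.comp_hasDerivAt (0 : ℝ) hline
  have hconst : HasDerivWithinAt (fun t : ℝ => f (x + t • (y - x))) 0 (Set.Icc 0 1) 0 :=
    (hasDerivWithinAt_const (0 : ℝ) _ (f x)).congr
      (fun t ht => hpl.apply_eq_of_eq hSc hx hy hxy ht) (by simp)
  exact (uniqueDiffOn_Icc_zero_one 0 ⟨le_rfl, zero_le_one⟩).eq_deriv _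
    hcomp.hasDerivWithinAt hconst

theorem deriv_eq_zero_iff (hSc : Convex ℝ S) (hpl : Pseudolinear S f f')
    (hfx : HasFDerivAt f (f' x) x) (hx : x ∈ S) (hy : y ∈ S) :
    f' x (y - x) = 0 ↔ f x = f y :=
  ⟨hpl.eq_of_deriv_eq_zero hx hy, hpl.deriv_eq_zero_of_eq hSc hfx hx hy⟩

theorem apply_eq_left_iff_eq_right (hSc : Convex ℝ S) (hpl : Pseudolinear S f f')
    (hdiff : ∀ z ∈ S, HasFDerivAt f (f' z) z) (hx : x ∈ S) (hy : y ∈ S) {t : ℝ}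
    (ht : t ∈ Set.Ioo (0 : ℝ) 1) :
    f (x + t • (y - x)) = f x ↔ f (x + t • (y - x)) = f y := by
  set z := x + t • (y - x)
  have hz : z ∈ S := hSc.add_smul_sub_mem hx hy (Set.Ioo_subset_Icc_self ht)
  rw [← hpl.deriv_eq_zero_iff hSc (hdiff z hz) hz hx,
    ← hpl.deriv_eq_zero_iff hSc (hdiff z hz) hz hy,
    show x - z = (-t) • (y - x) by module, show y - z = (1 - t) • (y - x) by module,
    map_smul, map_smul, smul_eq_mul, smul_eq_mul, mul_eq_zero, mul_eq_zero,
    neg_eq_zero, sub_eq_zero]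
  simp only [ht.1.ne', ht.2.ne', false_or]

theorem apply_mem_openSegment (hSc : Convex ℝ S) (hpl : Pseudolinear S f f')
    (hdiff : ∀ z ∈ S, HasFDerivAt f (f' z) z) (hx : x ∈ S) (hy : y ∈ S) (hxy : f x ≠ f y)
    {t : ℝ} (ht : t ∈ Set.Ioo (0 : ℝ) 1) :
    f (x + t • (y - x)) ∈ openSegment ℝ (f x) (f y) := by
  have hiff := hpl.apply_eq_left_iff_eq_right hSc hdiff hx hy ht
  refine mem_openSegment_of_ne_left_right (fun h => hxy ?_) (fun h => hxy ?_) ?_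
  · exact h.trans (hiff.1 h.symm)
  · exact (hiff.2 h.symm).symm.trans h.symm
  · rw [segment_eq_uIcc]
    exact hpl.apply_mem_uIcc hSc hx hy (Set.Ioo_subset_Icc_self ht)

end Pseudolinear

theorem stmt_6_general {E : Type*} [NormedAddCommGroup E] [NormedSpace ℝ E]
    {S : Set E} (hSc : Convex ℝ S)
    (f : E → ℝ) (f' : E → E →L[ℝ] ℝ)
    (hdiff : ∀ x ∈ S, HasFDerivAt f (f' x) x)
    (hpl : Pseudolinear S f f') :
    ∀ x ∈ S, ∀ y ∈ S, ∀ l ∈ Set.Ioo (0:ℝ) 1,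
      ∃ b : ℝ, 0 < b ∧ l * b ≤ 1 ∧ (f x ≠ f y → l * b < 1) ∧
        f (x + l • (y - x)) = l * b * f y + (1 - l * b) * f x := by
  intro x hx y hy l hl
  by_cases hxy : f x = f y
  · refine ⟨1, one_pos, by linarith [hl.2], fun h => (h hxy).elim, ?_⟩
    rw [hpl.apply_eq_of_eq hSc hx hy hxy (Set.Ioo_subset_Icc_self hl), ← hxy]
    ring
  · obtain ⟨a, μ, ha, hμ, hsum, hcomb⟩ := hpl.apply_mem_openSegment hSc hdiff hx hy hxy hl
    have hlμ : l * (μ / l) = μ := mul_div_cancel₀ μ hl.1.ne'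
    refine ⟨μ / l, div_pos hμ hl.1, ?_, fun _ => ?_, ?_⟩ <;> rw [hlμ]
    · linarith
    · linarith
    · rw [← hcomb, smul_eq_mul, smul_eq_mul, ← hsum]
      ring

theorem stmt_6 {E : Type*} [NormedAddCommGroup E] [NormedSpace ℝ E] [CompleteSpace E]
    {S : Set E} (hSo : IsOpen S) (hSc : Convex ℝ S)
    (f : E → ℝ) (f' : E → E →L[ℝ] ℝ)
    (hdiff : ∀ x ∈ S, HasFDerivAt f (f' x) x)
    (hpl : Pseudolinear S f f') :
    ∀ x ∈ S, ∀ y ∈ S, ∀ l ∈ Set.Ioo (0:ℝ) 1,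
      ∃ b : ℝ, 0 < b ∧ l * b ≤ 1 ∧ (f x ≠ f y → l * b < 1) ∧
        f (x + l • (y - x)) = l * b * f y + (1 - l * b) * f x :=
  stmt_6_general hSc f f' hdiff hpl
end

section
/- Let f be a Fréchet differentiable pseudolinear function on an open convex set S in a real Banach space E. If x, y ∈ S and f(x) = f(y), then f(x + λ(y − x)) = f(x) for all λ ∈ [0,1]. -/
theorem stmt_7 {E : Type*} [NormedAddCommGroup E] [NormedSpace ℝ E] [CompleteSpace E]
    {S : Set E} (hSo : IsOpen S) (hSc : Convex ℝ S)
    (f : E → ℝ) (f' : E → E →L[ℝ] ℝ)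
    (hdiff : ∀ x ∈ S, HasFDerivAt f (f' x) x)
    (hpl : Pseudolinear S f f') :
    ∀ x ∈ S, ∀ y ∈ S, f x = f y →
      ∀ l ∈ Set.Icc (0:ℝ) 1, f (x + l • (y - x)) = f x := by
  intro x hx y hy hfxy l hl
  obtain ⟨hl0, hl1⟩ := hl
  rcases eq_or_lt_of_le hl0 with h0 | h0
  · simp [← h0]
  rcases eq_or_lt_of_le hl1 with h1 | h1
  · rw [h1]
    have : x + (1:ℝ) • (y - x) = y := by module
    rw [this, hfxy]
  set z := x + l • (y - x) with hzdef
  have hzS : z ∈ S := by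
    have := hSc hx hy (by linarith : (0:ℝ) ≤ 1 - l) hl0 (by ring)
    convert this using 1
    rw [hzdef]; module
  have hxz : x - z = (-l) • (y - x) := by rw [hzdef]; module
  have hyz : y - z = (1 - l) • (y - x) := by rw [hzdef]; module
  by_contra hne
  rcases lt_or_gt_of_ne hne with hlt | hgt
  · have h1' := hpl.2 z hzS x hx (by simpa using hlt)
    have h2' := hpl.2 z hzS y hy (by simp only [neg_lt_neg_iff]; rw [← hfxy]; exact hlt)
    simp only [ContinuousLinearMap.neg_apply, hxz, hyz, map_smul, smul_eq_mul,
      neg_lt, neg_zero, neg_neg] at h1' h2'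
    nlinarith
  · have h1' := hpl.1 z hzS x hx hgt
    have h2' := hpl.1 z hzS y hy (by rw [← hfxy]; exact hgt)
    rw [hxz] at h1'; rw [hyz] at h2'
    simp only [map_smul, smul_eq_mul] at h1' h2'
    nlinarith
end

section
/- Let f be a continuous real-valued function on a convex set S in a real Banach space E. Then f is both semistrictly quasiconvex and semistrictly quasiconcave on S if and only if for all x, y ∈ S and λ ∈ (0,1) there exists a number b = b(x,y,λ) with 0 < λ·b < 1 such that f(x + λ(y − x)) = λ·b·f(y) + (1 − λ·b)·f(x). -/
def SemistrictlyQuasiconvex {E : Type*} [NormedAddCommGroup E] [NormedSpace ℝ E]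
    (S : Set E) (f : E → ℝ) : Prop :=
  ∀ x ∈ S, ∀ y ∈ S, ∀ l ∈ Set.Ioo (0:ℝ) 1,
    f y < f x → f (x + l • (y - x)) < f x

/-!
Writing `μ = λ b`, the condition says that `f (x + λ (y - x))` lies in the open segment between
`f x` and `f y`. When `f x ≠ f y`, semistrict quasiconvexity of `f` and of `-f` give exactly this
strict betweenness. When `f x = f y`, continuity enters: a continuous semistrictly quasiconvex
function is quasiconvex, because a value above `max (f x) (f y)` at some point `z` of the segment
would, by the intermediate value theorem, be preceded by a point `w` with
`max (f x) (f y) < f w < f z`, and moving from `w` towards `y` must strictly decrease `f`.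
Applied to `f` and `-f` this pins `f z = f x`.
-/

open Set

theorem Real.mem_openSegment_iff {a b c : ℝ} :
    c ∈ openSegment ℝ a b ↔ ∃ μ, 0 < μ ∧ μ < 1 ∧ c = μ * b + (1 - μ) * a := by
  simp only [openSegment_eq_image, mem_image, mem_Ioo, smul_eq_mul, and_assoc]
  exact exists_congr fun μ => by rw [eq_comm, add_comm]

section

variable {E : Type*} [NormedAddCommGroup E] [NormedSpace ℝ E] {S : Set E} {f : E → ℝ}
  {x y : E} {l : ℝ}

theorem add_smul_sub_eq_add_one_sub_smul_sub :
    x + l • (y - x) = y + (1 - l) • (x - y) := by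
  module

theorem SemistrictlyQuasiconvex.apply_add_smul_sub_le_max (h : SemistrictlyQuasiconvex S f)
    (hS : Convex ℝ S) (hf : ContinuousOn f S) (hx : x ∈ S) (hy : y ∈ S) (hl : l ∈ Ioo (0:ℝ) 1) :
    f (x + l • (y - x)) ≤ max (f x) (f y) := by
  by_contra! hlt
  obtain ⟨c, hMc, hcz⟩ := exists_between hlt
  have hcont : ContinuousOn (fun t : ℝ => f (x + t • (y - x))) (Icc 0 l) :=
    hf.comp (by fun_prop) fun t ht => hS.add_smul_sub_mem hx hy ⟨ht.1, ht.2.trans hl.2.le⟩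
  obtain ⟨t, ht, hwc⟩ := intermediate_value_Ioo hl.1.le hcont
    ⟨by simpa using (le_max_left _ _).trans_lt hMc, hcz⟩
  dsimp only at hwc
  have hw : x + t • (y - x) ∈ S := hS.add_smul_sub_mem hx hy ⟨ht.1.le, ht.2.le.trans hl.2.le⟩
  have ht1 : 0 < 1 - t := by linarith [ht.2, hl.2]
  -- `x + l • (y - x)` lies on the segment from `w := x + t • (y - x)` to `y`, and `f y < f w`.
  have hm : (l - t) / (1 - t) ∈ Ioo (0:ℝ) 1 :=
    ⟨div_pos (by linarith [ht.2]) ht1, (div_lt_one ht1).2 (by linarith [hl.2])⟩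
  have hwz :
      x + t • (y - x) + ((l - t) / (1 - t)) • (y - (x + t • (y - x))) = x + l • (y - x) := by
    have : (l - t) / (1 - t) * (1 - t) = l - t := div_mul_cancel₀ _ ht1.ne'
    linear_combination (norm := module) this • (y - x)
  have := h _ hw y hy _ hm (by rw [hwc]; exact (le_max_right _ _).trans_lt hMc)
  rw [hwz, hwc] at this
  exact this.not_gt hcz

theorem SemistrictlyQuasiconvex.apply_add_smul_sub_mem_Ioo (h : SemistrictlyQuasiconvex S f)
    (hneg : SemistrictlyQuasiconvex S (fun x => -f x)) (hx : x ∈ S) (hy : y ∈ S)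
    (hl : l ∈ Ioo (0:ℝ) 1) (hxy : f x < f y) :
    f (x + l • (y - x)) ∈ Ioo (f x) (f y) := by
  refine ⟨neg_lt_neg_iff.1 (hneg x hx y hy l hl (neg_lt_neg hxy)), ?_⟩
  rw [add_smul_sub_eq_add_one_sub_smul_sub]
  exact h y hy x hx (1 - l) ⟨by linarith [hl.2], by linarith [hl.1]⟩ hxy

theorem semistrictlyQuasiconvex_and_neg_iff (hS : Convex ℝ S) (hf : ContinuousOn f S) :
    (SemistrictlyQuasiconvex S f ∧ SemistrictlyQuasiconvex S (fun x => -f x)) ↔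
      ∀ x ∈ S, ∀ y ∈ S, ∀ l ∈ Ioo (0:ℝ) 1,
        f (x + l • (y - x)) ∈ openSegment ℝ (f x) (f y) := by
  constructor
  · rintro ⟨h, hneg⟩ x hx y hy l hl
    rcases lt_trichotomy (f x) (f y) with hxy | hxy | hxy
    · rw [openSegment_eq_Ioo hxy]
      exact h.apply_add_smul_sub_mem_Ioo hneg hx hy hl hxy
    · have hle := h.apply_add_smul_sub_le_max hS hf hx hy hl
      have hge := hneg.apply_add_smul_sub_le_max hS hf.neg hx hy hl
      rw [← hxy, max_self] at hle hge
      rw [← hxy, openSegment_same]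
      exact le_antisymm hle (neg_le_neg_iff.1 hge)
    · have hl' : 1 - l ∈ Ioo (0:ℝ) 1 := ⟨by linarith [hl.2], by linarith [hl.1]⟩
      rw [openSegment_symm, openSegment_eq_Ioo hxy, add_smul_sub_eq_add_one_sub_smul_sub]
      exact h.apply_add_smul_sub_mem_Ioo hneg hy hx hl' hxy
  · intro h
    refine ⟨fun x hx y hy l hl hxy => ?_, fun x hx y hy l hl hxy => ?_⟩
    · have hz := h x hx y hy l hl
      rw [openSegment_symm, openSegment_eq_Ioo hxy] at hz
      exact hz.2
    · have hz := h x hx y hy l hl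
      rw [openSegment_eq_Ioo (neg_lt_neg_iff.1 hxy)] at hz
      exact neg_lt_neg hz.1

end

theorem stmt_9_general {E : Type*} [NormedAddCommGroup E] [NormedSpace ℝ E]
    {S : Set E} (hSc : Convex ℝ S)
    (f : E → ℝ) (hf : ContinuousOn f S) :
    (SemistrictlyQuasiconvex S f ∧ SemistrictlyQuasiconvex S (fun x => -f x)) ↔
      (∀ x ∈ S, ∀ y ∈ S, ∀ l ∈ Set.Ioo (0:ℝ) 1,
        ∃ b : ℝ, 0 < l * b ∧ l * b < 1 ∧
          f (x + l • (y - x)) = l * b * f y + (1 - l * b) * f x) := by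
  rw [semistrictlyQuasiconvex_and_neg_iff hSc hf]
  refine forall₂_congr fun x _ => forall₂_congr fun y _ => forall₂_congr fun l hl => ?_
  rw [Real.mem_openSegment_iff, (mul_left_surjective₀ hl.1.ne').exists]

theorem stmt_9 {E : Type*} [NormedAddCommGroup E] [NormedSpace ℝ E] [CompleteSpace E]
    {S : Set E} (hSc : Convex ℝ S)
    (f : E → ℝ) (hf : ContinuousOn f S) :
    (SemistrictlyQuasiconvex S f ∧ SemistrictlyQuasiconvex S (fun x => -f x)) ↔
      (∀ x ∈ S, ∀ y ∈ S, ∀ l ∈ Set.Ioo (0:ℝ) 1,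
        ∃ b : ℝ, 0 < l * b ∧ l * b < 1 ∧
          f (x + l • (y - x)) = l * b * f y + (1 - l * b) * f x) :=
  stmt_9_general hSc f hf
end

section
/- Let f be a continuous real-valued function on a convex set S in a real Banach space E that is semistrictly quasiconvex. Then f is quasiconvex on S, i.e., f(x + t(y − x)) ≤ max{f(x), f(y)} for all x, y ∈ S and t ∈ [0,1]. -/
theorem stmt_10 {E : Type*} [NormedAddCommGroup E] [NormedSpace ℝ E] [CompleteSpace E]
    {S : Set E} (hSc : Convex ℝ S)
    (f : E → ℝ) (hf : ContinuousOn f S)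
    (hssq : SemistrictlyQuasiconvex S f) :
    ∀ x ∈ S, ∀ y ∈ S, ∀ t ∈ Set.Icc (0:ℝ) 1,
      f (x + t • (y - x)) ≤ max (f x) (f y) := by
  intro x hx y hy t ht
  by_contra hcon
  push_neg at hcon
  set z := x + t • (y - x) with hz
  have hfx : f x < f z := lt_of_le_of_lt (le_max_left _ _) hcon
  have hfy : f y < f z := lt_of_le_of_lt (le_max_right _ _) hcon
  have ht0 : t ≠ 0 := by
    rintro rfl
    simp [hz] at hfx
  have ht1 : t ≠ 1 := by
    rintro rfl
    simp [hz] at hfy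
  have ht0' : 0 < t := lt_of_le_of_ne ht.1 (Ne.symm ht0)
  have ht1' : t < 1 := lt_of_le_of_ne ht.2 ht1
  have hzS : z ∈ S := hSc.add_smul_sub_mem hx hy ht
  -- find l ∈ (0,1) with f (z + l • (x - z)) > f y
  have hcont : ContinuousWithinAt (fun l : ℝ => f (z + l • (x - z))) (Set.Icc 0 1) 0 := by
    apply ContinuousWithinAt.comp (f := fun l : ℝ => z + l • (x - z))
      (hf.continuousWithinAt (by simpa using hzS))
    · exact (Continuous.continuousWithinAt (by continuity))
    · intro l hl
      exact hSc.add_smul_sub_mem hzS hx hl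
  have hev : ∀ᶠ l in nhdsWithin 0 (Set.Icc (0:ℝ) 1),
      f y < f (z + l • (x - z)) := by
    exact hcont.eventually (Ioi_mem_nhds (by simpa using hfy))
  have hne : (nhdsWithin (0:ℝ) (Set.Ioo 0 1)).NeBot := by
    apply mem_closure_iff_nhdsWithin_neBot.mp
    rw [closure_Ioo (by norm_num : (0:ℝ) ≠ 1)]
    exact ⟨le_refl 0, by norm_num⟩
  have hev' : ∀ᶠ l in nhdsWithin 0 (Set.Ioo (0:ℝ) 1),
      f y < f (z + l • (x - z)) ∧ l ∈ Set.Ioo (0:ℝ) 1 := by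
    filter_upwards [hev.filter_mono (nhdsWithin_mono _ Set.Ioo_subset_Icc_self),
      self_mem_nhdsWithin] with l h1 h2 using ⟨h1, h2⟩
  obtain ⟨l, hful, hl⟩ := hev'.exists
  set u := z + l • (x - z) with hu
  have huS : u ∈ S := hSc.add_smul_sub_mem hzS hx ⟨hl.1.le, hl.2.le⟩
  -- f u < f z by ssq applied to (z, x)
  have h1 : f u < f z := hssq z hzS x hx l hl hfx
  -- z is on the open segment (u, y)
  set s := t * (1 - l) with hs
  have hs0 : 0 < s := mul_pos ht0' (by linarith [hl.2])
  have hst : s < t := by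
    have := hl.1
    nlinarith
  have hux : u = x + s • (y - x) := by
    rw [hu, hz, hs]
    module
  set m := (t - s) / (1 - s) with hm
  have hs1 : s < 1 := lt_trans hst ht1'
  have hm0 : 0 < m := div_pos (by linarith) (by linarith)
  have hm1 : m < 1 := (div_lt_one (by linarith)).mpr (by linarith)
  have hzum : z = u + m • (y - u) := by
    rw [hux, hz, hm]
    have h1s : (1:ℝ) - s ≠ 0 := by linarith
    rw [show x + s • (y - x) + ((t - s) / (1 - s)) • (y - (x + s • (y - x)))
        = x + (s + (t - s) / (1 - s) * (1 - s)) • (y - x) by module]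
    rw [div_mul_cancel₀ _ h1s]
    ring_nf
  have h2 : f z < f u := by
    rw [hzum]
    exact hssq u huS y hy m ⟨hm0, hm1⟩ hful
  linarith
end

section
/- Let S be an open convex set in a real Banach space E and let f : S → ℝ be Fréchet differentiable, semistrictly quasiconvex, and semistrictly quasiconcave on S. Then f is pseudolinear on S if and only if the implication holds: x, y ∈ S and ⟨∇f(x), y − x⟩ = 0 imply f(y) = f(x). -/
section

variable {E : Type*} [NormedAddCommGroup E] [NormedSpace ℝ E]

theorem SemistrictlyQuasiconvex.isMaxOn_segment {S : Set E} {f : E → ℝ}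
    (hf : SemistrictlyQuasiconvex S f) {x y : E} (hx : x ∈ S) (hy : y ∈ S) (hlt : f y < f x) :
    IsMaxOn f (segment ℝ x y) x := by
  rw [segment_eq_image']
  rintro _ ⟨l, ⟨hl₀, hl₁⟩, rfl⟩
  show f (x + l • (y - x)) ≤ f x
  rcases hl₀.eq_or_lt with rfl | hl₀
  · simp
  rcases hl₁.eq_or_lt with rfl | hl₁
  · simpa using hlt.le
  exact (hf x hx y hy l ⟨hl₀, hl₁⟩ hlt).le

theorem SemistrictlyQuasiconvex.apply_sub_nonpos_of_lt {S : Set E} {f : E → ℝ}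
    {f' : E →L[ℝ] ℝ} (hf : SemistrictlyQuasiconvex S f) {x y : E} (hx : x ∈ S) (hy : y ∈ S)
    (hd : HasFDerivAt f f' x) (hlt : f y < f x) :
    f' (y - x) ≤ 0 :=
  (hf.isMaxOn_segment hx hy hlt).localize.hasFDerivWithinAt_nonpos hd.hasFDerivWithinAt
    (sub_mem_posTangentConeAt_of_segment_subset subset_rfl)

theorem SemistrictlyQuasiconvex.pseudoconvex {S : Set E} {f : E → ℝ} {f' : E → E →L[ℝ] ℝ}
    (hf : SemistrictlyQuasiconvex S f) (hd : ∀ x ∈ S, HasFDerivAt f (f' x) x)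
    (hzero : ∀ x ∈ S, ∀ y ∈ S, f' x (y - x) = 0 → f x ≤ f y) :
    Pseudoconvex S f f' := fun x hx y hy hlt =>
  (hf.apply_sub_nonpos_of_lt hx hy (hd x hx) hlt).lt_of_ne
    fun h => (hzero x hx y hy h).not_gt hlt

theorem Pseudoconvex.le_of_apply_sub_eq_zero {S : Set E} {f : E → ℝ} {f' : E → E →L[ℝ] ℝ}
    (hf : Pseudoconvex S f f') {x y : E} (hx : x ∈ S) (hy : y ∈ S) (h : f' x (y - x) = 0) :
    f x ≤ f y :=
  not_lt.mp fun hlt => (hf x hx y hy hlt).ne h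

end

theorem stmt_11_general {E : Type*} [NormedAddCommGroup E] [NormedSpace ℝ E]
    {S : Set E}
    (f : E → ℝ) (f' : E → E →L[ℝ] ℝ)
    (hdiff : ∀ x ∈ S, HasFDerivAt f (f' x) x)
    (hqc : SemistrictlyQuasiconvex S f)
    (hqcc : SemistrictlyQuasiconvex S (fun x => -f x)) :
    Pseudolinear S f f' ↔
      (∀ x ∈ S, ∀ y ∈ S, f' x (y - x) = 0 → f y = f x) := by
  constructor
  · rintro ⟨hpc, hpcc⟩ x hx y hy h
    have hle : f x ≤ f y := hpc.le_of_apply_sub_eq_zero hx hy h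
    have hge : -f x ≤ -f y := hpcc.le_of_apply_sub_eq_zero hx hy (by simp [h])
    linarith
  · intro H
    refine ⟨hqc.pseudoconvex hdiff fun x hx y hy h => (H x hx y hy h).ge,
      hqcc.pseudoconvex (fun x hx => (hdiff x hx).neg) fun x hx y hy h => ?_⟩
    simp only [neg_apply, neg_eq_zero] at h
    simp [H x hx y hy h]

theorem stmt_11 {E : Type*} [NormedAddCommGroup E] [NormedSpace ℝ E] [CompleteSpace E]
    {S : Set E} (hSo : IsOpen S) (hSc : Convex ℝ S)
    (f : E → ℝ) (f' : E → E →L[ℝ] ℝ)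
    (hdiff : ∀ x ∈ S, HasFDerivAt f (f' x) x)
    (hqc : SemistrictlyQuasiconvex S f)
    (hqcc : SemistrictlyQuasiconvex S (fun x => -f x)) :
    Pseudolinear S f f' ↔
      (∀ x ∈ S, ∀ y ∈ S, f' x (y - x) = 0 → f y = f x) :=
  stmt_11_general f f' hdiff hqc hqcc
end

section
/- Let f be a Fréchet differentiable function on an open convex set S in a real Banach space E such that for all x, y ∈ S and λ ∈ [0,1] there exists b = b(x,y,λ) > 0 with f(x + λ(y − x)) = λ·b·f(y) + (1 − λ·b)·f(x), and such that for each x, y the limit q(x,y) = lim_{λ→0⁺} b(x,y,λ) exists and is strictly positive. Then f is pseudolinear on S. -/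
theorem stmt_16 {E : Type*} [NormedAddCommGroup E] [NormedSpace ℝ E] [CompleteSpace E]
    {S : Set E} (hSo : IsOpen S) (hSc : Convex ℝ S)
    (f : E → ℝ) (f' : E → E →L[ℝ] ℝ)
    (hdiff : ∀ x ∈ S, HasFDerivAt f (f' x) x)
    (b : E → E → ℝ → ℝ) (q : E → E → ℝ)
    (hb : ∀ x ∈ S, ∀ y ∈ S, ∀ l ∈ Set.Icc (0:ℝ) 1,
      0 < b x y l ∧
      f (x + l • (y - x)) = l * b x y l * f y + (1 - l * b x y l) * f x)
    (hq : ∀ x ∈ S, ∀ y ∈ S,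
      Filter.Tendsto (b x y) (nhdsWithin 0 (Set.Ioi 0)) (nhds (q x y)) ∧
      0 < q x y) :
    Pseudolinear S f f' := by
  have key : ∀ x ∈ S, ∀ y ∈ S, f' x (y - x) = q x y * (f y - f x) := by
    intro x hx y hy
    set g : ℝ → ℝ := fun l => f (x + l • (y - x)) with hg
    have hpath : HasDerivAt (fun l : ℝ => x + l • (y - x)) (y - x) 0 := by
      simpa using ((hasDerivAt_id (0:ℝ)).smul_const (y - x)).const_add x
    have hfx : HasFDerivAt f (f' x) (x + (0:ℝ) • (y - x)) := by
      simpa using hdiff x hx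
    have hd : HasDerivAt g (f' x (y - x)) 0 := hfx.comp_hasDerivAt 0 hpath
    have hslope : Filter.Tendsto (slope g 0) (nhdsWithin 0 (Set.Ioi 0))
        (nhds (f' x (y - x))) :=
      (hasDerivAt_iff_tendsto_slope.mp hd).mono_left
        (nhdsWithin_mono 0 (by intro t ht; exact ne_of_gt ht))
    have heq : ∀ᶠ l in nhdsWithin 0 (Set.Ioi 0),
        slope g 0 l = b x y l * (f y - f x) := by
      have h1 : ∀ᶠ l in nhdsWithin 0 (Set.Ioi 0), l ∈ Set.Ioi (0:ℝ) :=
        self_mem_nhdsWithin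
      have h2 : ∀ᶠ l in nhdsWithin (0:ℝ) (Set.Ioi 0), l < 1 :=
        Filter.Eventually.filter_mono nhdsWithin_le_nhds (eventually_lt_nhds one_pos)
      filter_upwards [h1, h2] with l hl hl1
      have hl0 : (0:ℝ) < l := hl
      have hmem : l ∈ Set.Icc (0:ℝ) 1 := ⟨le_of_lt hl0, le_of_lt hl1⟩
      have hbl := (hb x hx y hy l hmem).2
      have hg0 : g 0 = f x := by simp [hg]
      have : g l - g 0 = l * (b x y l * (f y - f x)) := by
        rw [hg0, hg]; simp only; rw [hbl]; ring
      rw [slope_def_field]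
      field_simp [ne_of_gt hl0] at this ⊢
      linarith [this]
    have hslope2 : Filter.Tendsto (slope g 0) (nhdsWithin 0 (Set.Ioi 0))
        (nhds (q x y * (f y - f x))) := by
      refine Filter.Tendsto.congr' (Filter.EventuallyEq.symm heq) ?_
      exact ((hq x hx y hy).1).mul_const _
    exact tendsto_nhds_unique hslope hslope2
  constructor
  · intro x hx y hy hlt
    rw [key x hx y hy]
    exact mul_neg_of_pos_of_neg (hq x hx y hy).2 (by linarith)
  · intro x hx y hy hlt
    have hlt' : f x < f y := by simpa using hlt
    have hpos : (0:ℝ) < f' x (y - x) := by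
      rw [key x hx y hy]
      exact mul_pos (hq x hx y hy).2 (by linarith)
    simpa using hpos
end

section
/- Let f be a Fréchet differentiable semistrictly quasiconvex function on an open convex set S in a real Banach space E satisfying: x, y ∈ S and ⟨∇f(x), y − x⟩ = 0 imply f(y) ≥ f(x). Then f is pseudoconvex on S. -/
namespace SemistrictlyQuasiconvex

variable {E : Type*} [NormedAddCommGroup E] [NormedSpace ℝ E] {S : Set E} {f : E → ℝ} {x y : E}

theorem isMaxOn_segment_s17 (hf : SemistrictlyQuasiconvex S f) (hx : x ∈ S) (hy : y ∈ S)
    (hlt : f y < f x) : IsMaxOn f (segment ℝ x y) x := by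
  rw [segment_eq_image']
  rintro _ ⟨θ, ⟨hθ₀, hθ₁⟩, rfl⟩
  show f (x + θ • (y - x)) ≤ f x
  rcases hθ₀.eq_or_lt with rfl | hθ₀
  · simp
  rcases hθ₁.eq_or_lt with rfl | hθ₁
  · simpa using hlt.le
  exact (hf x hx y hy θ ⟨hθ₀, hθ₁⟩ hlt).le

theorem hasFDerivAt_apply_sub_nonpos (hf : SemistrictlyQuasiconvex S f) (hx : x ∈ S)
    (hy : y ∈ S) (hlt : f y < f x) {f' : E →L[ℝ] ℝ} (hf' : HasFDerivAt f f' x) :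
    f' (y - x) ≤ 0 :=
  (hf.isMaxOn_segment_s17 hx hy hlt).localize.hasFDerivWithinAt_nonpos hf'.hasFDerivWithinAt
    (sub_mem_posTangentConeAt_of_segment_subset subset_rfl)

end SemistrictlyQuasiconvex

theorem stmt_17_general {E : Type*} [NormedAddCommGroup E] [NormedSpace ℝ E]
    {S : Set E}
    (f : E → ℝ) (f' : E → E →L[ℝ] ℝ)
    (hdiff : ∀ x ∈ S, HasFDerivAt f (f' x) x)
    (hssq : SemistrictlyQuasiconvex S f)
    (himp : ∀ x ∈ S, ∀ y ∈ S, f' x (y - x) = 0 → f x ≤ f y) :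
    ∀ x ∈ S, ∀ y ∈ S, f y < f x → f' x (y - x) < 0 := by
  intro x hx y hy hlt
  refine (hssq.hasFDerivAt_apply_sub_nonpos hx hy hlt (hdiff x hx)).lt_of_ne fun hzero ↦ ?_
  exact (himp x hx y hy hzero).not_gt hlt

theorem stmt_17 {E : Type*} [NormedAddCommGroup E] [NormedSpace ℝ E] [CompleteSpace E]
    {S : Set E} (hSo : IsOpen S) (hSc : Convex ℝ S)
    (f : E → ℝ) (f' : E → E →L[ℝ] ℝ)
    (hdiff : ∀ x ∈ S, HasFDerivAt f (f' x) x)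
    (hssq : SemistrictlyQuasiconvex S f)
    (himp : ∀ x ∈ S, ∀ y ∈ S, f' x (y - x) = 0 → f x ≤ f y) :
    ∀ x ∈ S, ∀ y ∈ S, f y < f x → f' x (y - x) < 0 :=
  stmt_17_general f f' hdiff hssq himp
end

section
/- Let f be a Fréchet differentiable pseudolinear function on an open convex set S in a real Banach space E. Then f is semistrictly quasilinear on S: for all x, y ∈ S and λ ∈ (0,1), f(y) < f(x) implies f(y) < f(x + λ(y − x)) < f(x). -/
/-!
A pseudoconvex function is quasiconvex: at a point `z` of `[x, y]` with `f z` above both `f x`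
and `f y`, the derivative would be negative in the two opposite directions `x - z` and `y - z`.
So if `f y < f x`, then `f ≤ f x` on `[x, y]`. Should `f z = f x` at an inner point `z`, then `z`
maximises `f` on the segment, and Fermat's rule gives `f' z (x - z) ≤ 0`, whereas pseudoconvexity
at `z` gives `f' z (y - z) < 0`, that is `f' z (x - z) > 0`. Applied to `-f`, which is
pseudoconvex as well, the same argument gives the lower bound.
-/

open Set

namespace Pseudoconvex

variable {E : Type*} [NormedAddCommGroup E] [NormedSpace ℝ E]
  {S : Set E} {f : E → ℝ} {f' : E → E →L[ℝ] ℝ}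

theorem quasiconvexOn (hS : Convex ℝ S) (hf : Pseudoconvex S f f') : QuasiconvexOn ℝ S f := by
  refine quasiconvexOn_iff_le_max.2 ⟨hS, fun x hx y hy a b ha hb hab => ?_⟩
  by_contra! h
  rw [max_lt_iff] at h
  have hz : a • x + b • y ∈ S := hS hx hy ha hb hab
  obtain rfl : a = 1 - b := by linarith
  have hx' := hf _ hz x hx h.1
  have hy' := hf _ hz y hy h.2
  rw [show x - ((1 - b) • x + b • y) = b • (x - y) by module, map_smul, smul_eq_mul] at hx'
  rw [show y - ((1 - b) • x + b • y) = (b - 1) • (x - y) by module, map_smul,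
    smul_eq_mul] at hy'
  nlinarith [mul_nonneg (mul_nonneg ha hb) (sq_nonneg (f' ((1 - b) • x + b • y) (x - y)))]

theorem apply_add_smul_sub_lt (hS : Convex ℝ S) (hf : Pseudoconvex S f f')
    {x y : E} (hx : x ∈ S) (hy : y ∈ S) {l : ℝ} (hl : l ∈ Ioo (0 : ℝ) 1)
    (hderiv : HasFDerivAt f (f' (x + l • (y - x))) (x + l • (y - x))) (hxy : f y < f x) :
    f (x + l • (y - x)) < f x := by
  set z := x + l • (y - x)
  have hseg : segment ℝ x y ⊆ {w ∈ S | f w ≤ f x} :=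
    (hf.quasiconvexOn hS (f x)).segment_subset ⟨hx, le_rfl⟩ ⟨hy, hxy.le⟩
  have hz : z ∈ segment ℝ x y := by
    rw [segment_eq_image']
    exact ⟨l, Ioo_subset_Icc_self hl, rfl⟩
  refine (hseg hz).2.lt_of_ne fun hzx => ?_
  have hmax : IsLocalMaxOn f (segment ℝ x y) z :=
    IsMaxOn.localize fun w hw => hzx ▸ (hseg hw).2
  have hfermat : f' z (x - z) ≤ 0 :=
    hmax.hasFDerivWithinAt_nonpos hderiv.hasFDerivWithinAt <|
      sub_mem_posTangentConeAt_of_segment_subset <|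
        (convex_segment x y).segment_subset hz (left_mem_segment ℝ x y)
  have hdesc : f' z (y - z) < 0 := hf z (hseg hz).1 y hy (hzx ▸ hxy)
  rw [show x - z = (-l) • (y - x) by module, map_smul, smul_eq_mul] at hfermat
  rw [show y - z = (1 - l) • (y - x) by module, map_smul, smul_eq_mul] at hdesc
  nlinarith [hl.1, hl.2]

end Pseudoconvex

theorem stmt_18_general {E : Type*} [NormedAddCommGroup E] [NormedSpace ℝ E]
    {S : Set E} (hSc : Convex ℝ S)
    (f : E → ℝ) (f' : E → E →L[ℝ] ℝ)
    (hdiff : ∀ x ∈ S, HasFDerivAt f (f' x) x)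
    (hpl : Pseudolinear S f f') :
    ∀ x ∈ S, ∀ y ∈ S, ∀ l ∈ Set.Ioo (0:ℝ) 1, f y < f x →
      f y < f (x + l • (y - x)) ∧ f (x + l • (y - x)) < f x := by
  intro x hx y hy l hl hyx
  have hzS : x + l • (y - x) ∈ S := hSc.add_smul_sub_mem hx hy (Ioo_subset_Icc_self hl)
  have hl' : 1 - l ∈ Ioo (0 : ℝ) 1 := ⟨sub_pos.2 hl.2, sub_lt_self 1 hl.1⟩
  have hswap : y + (1 - l) • (x - y) = x + l • (y - x) := by module
  refine ⟨?_, hpl.1.apply_add_smul_sub_lt hSc hx hy hl (hdiff _ hzS) hyx⟩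
  have hneg := hpl.2.apply_add_smul_sub_lt hSc hy hx hl' (hswap ▸ (hdiff _ hzS).neg)
    (neg_lt_neg hyx)
  rw [hswap] at hneg
  exact neg_lt_neg_iff.1 hneg

theorem stmt_18 {E : Type*} [NormedAddCommGroup E] [NormedSpace ℝ E] [CompleteSpace E]
    {S : Set E} (hSo : IsOpen S) (hSc : Convex ℝ S)
    (f : E → ℝ) (f' : E → E →L[ℝ] ℝ)
    (hdiff : ∀ x ∈ S, HasFDerivAt f (f' x) x)
    (hpl : Pseudolinear S f f') :
    ∀ x ∈ S, ∀ y ∈ S, ∀ l ∈ Set.Ioo (0:ℝ) 1, f y < f x →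
      f y < f (x + l • (y - x)) ∧ f (x + l • (y - x)) < f x :=
  stmt_18_general hSc f f' hdiff hpl
end
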